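/- arXiv:2105.03006 — 3 statements merged into one kernel-verified Lean document; each statement's English description precedes it below -/
import Mathlib

section
/- RM satisfies the standard quarrel postulate: if W is a simple voting game on [n] and Ŵ is the game obtained by inducing a quarrel between players i and j, then R̂M_i ≤ RM_i and R̂M_j ≤ RM_j, where R̂M denotes the Recursive Measure in Ŵ and RM the Recursive Measure in W. -/
open Finset

variable {α : Type*} [Fintype α] [DecidableEq α]

/-- A simple voting game on the player set `α`: a monotone collection of winning
coalitions in which the empty coalition loses and the full coalition wins. -/
def SimpleVotingGame (W : Finset (Finset α)) : Prop :=
  (∀ S T : Finset α, S ∈ W → S ⊆ T → T ∈ W) ∧ (∅ : Finset α) ∉ W ∧ (univ : Finset α) ∈ W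

/-- Player `i` is YES-decisive in the division `S`. -/
def YesDecisive (W : Finset (Finset α)) (i : α) (S : Finset α) : Prop :=
  i ∈ S ∧ S ∈ W ∧ S.erase i ∉ W

/-- Player `i` is NO-decisive in the division `S`. -/
def NoDecisive (W : Finset (Finset α)) (i : α) (S : Finset α) : Prop :=
  i ∉ S ∧ S ∉ W ∧ insert i S ∈ W

/-- The loyal children of a winning division `S`: the winning divisions `S \ {k}`, `k ∈ S`. -/
def LCwin (W : Finset (Finset α)) (S : Finset α) : Finset (Finset α) :=
  (S.image fun k => S.erase k).filter (· ∈ W)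

/-- The loyal children of a losing division `S`: the losing divisions `S ∪ {k}`, `k ∉ S`. -/
def LCloss (W : Finset (Finset α)) (S : Finset α) : Finset (Finset α) :=
  (Sᶜ.image fun k => insert k S).filter (· ∉ W)

/-- The YES-efficacy score `α⁺_i(S)`: `1` if `i` is YES-decisive in `S`, `0` if `S` is
losing or `i ∉ S`, and otherwise the arithmetic mean of `α⁺_i` over the loyal children. -/
noncomputable def alphaPlus (W : Finset (Finset α)) (i : α) (S : Finset α) : ℝ :=
  if i ∈ S ∧ S ∈ W ∧ S.erase i ∉ W then 1
  else if S ∉ W ∨ i ∉ S then 0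
  else (∑ T ∈ (LCwin W S).attach, alphaPlus W i T.1) / (LCwin W S).card
termination_by S.card
decreasing_by
  obtain ⟨T, hT⟩ := T
  simp only [LCwin, Finset.mem_filter, Finset.mem_image] at hT
  obtain ⟨⟨k, hk, rfl⟩, -⟩ := hT
  simpa using Finset.card_erase_lt_of_mem hk

/-- The NO-efficacy score `α⁻_i(S)`: `1` if `i` is NO-decisive in `S`, `0` if `S` is
winning or `i ∈ S`, and otherwise the arithmetic mean of `α⁻_i` over the loyal children. -/
noncomputable def alphaMinus (W : Finset (Finset α)) (i : α) (S : Finset α) : ℝ :=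
  if i ∉ S ∧ S ∉ W ∧ insert i S ∈ W then 1
  else if S ∈ W ∨ i ∈ S then 0
  else (∑ T ∈ (LCloss W S).attach, alphaMinus W i T.1) / (LCloss W S).card
termination_by Sᶜ.card
decreasing_by
  obtain ⟨T, hT⟩ := T
  simp only [LCloss, Finset.mem_filter, Finset.mem_image] at hT
  obtain ⟨⟨k, hk, rfl⟩, -⟩ := hT
  rw [Finset.compl_insert]
  exact Finset.card_erase_lt_of_mem hk

/-- The efficacy score `α_i(S) = α⁺_i(S) + α⁻_i(S)`. -/
noncomputable def alphaScore (W : Finset (Finset α)) (i : α) (S : Finset α) : ℝ :=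
  alphaPlus W i S + alphaMinus W i S

/-- The Recursive Measure of YES-voting power (a priori, equiprobable divisions). -/
noncomputable def RMplus (W : Finset (Finset α)) (i : α) : ℝ :=
  (1 / 2 ^ Fintype.card α) * ∑ S : Finset α, alphaPlus W i S

/-- The Recursive Measure of NO-voting power (a priori, equiprobable divisions). -/
noncomputable def RMminus (W : Finset (Finset α)) (i : α) : ℝ :=
  (1 / 2 ^ Fintype.card α) * ∑ S : Finset α, alphaMinus W i S

/-- The Recursive Measure of voting power of player `i` (a priori):
`RM_i = 2^{-m} · Σ_S α_i(S)` where `m` is the number of players. -/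
noncomputable def RM (W : Finset (Finset α)) (i : α) : ℝ :=
  (1 / 2 ^ Fintype.card α) * ∑ S : Finset α, alphaScore W i S

/-- `d` is a dummy voter: `d` is decisive in no division. -/
def IsDummy (W : Finset (Finset α)) (d : α) : Prop :=
  ∀ S : Finset α, d ∉ S → (insert d S ∈ W ↔ S ∈ W)

/-- Player `j` weakly dominates player `i`. -/
def WeaklyDominates (W : Finset (Finset α)) (j i : α) : Prop :=
  ∀ S : Finset α, i ∉ S → j ∉ S → insert i S ∈ W → insert j S ∈ W

/-- `What` is the game obtained from `W` by player `j` donating its vote to player `i`. -/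
def Donation (W What : Finset (Finset α)) (i j : α) : Prop :=
  ∀ S : Finset α, i ∉ S → j ∉ S →
    (insert i (insert j S) ∈ What ↔ insert i (insert j S) ∈ W) ∧
    (insert i S ∈ What ↔ insert i (insert j S) ∈ W) ∧
    (insert j S ∈ What ↔ S ∈ W) ∧
    (S ∈ What ↔ S ∈ W)

/-- `What` is obtained from `W` by inducing a (weak, symmetric) quarrel between `i` and `j`. -/
def Quarrel (W What : Finset (Finset α)) (i j : α) : Prop :=
  ∀ S : Finset α, i ∉ S → j ∉ S →
    (insert i (insert j S) ∈ What ↔ (insert i S ∈ W ∨ insert j S ∈ W)) ∧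
    (S ∈ What ↔ (insert i S ∈ W ∧ insert j S ∈ W)) ∧
    (insert i S ∈ What ↔ insert i S ∈ W) ∧
    (insert j S ∈ What ↔ insert j S ∈ W)

/-- The voting-independent (product) probability of a division `S`, given the
individual YES-vote probabilities `p`. -/
noncomputable def prodDist (p : α → ℝ) (S : Finset α) : ℝ :=
  (∏ k ∈ S, p k) * ∏ k ∈ Sᶜ, (1 - p k)

/-- The generalized Recursive Measure of YES-voting power under a
voting-independent probability distribution with vote probabilities `p`. -/
noncomputable def RMplusP (W : Finset (Finset α)) (p : α → ℝ) (i : α) : ℝ :=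
  ∑ S : Finset α, alphaPlus W i S * prodDist p S

/-- The generalized Recursive Measure of NO-voting power under a
voting-independent probability distribution with vote probabilities `p`. -/
noncomputable def RMminusP (W : Finset (Finset α)) (p : α → ℝ) (i : α) : ℝ :=
  ∑ S : Finset α, alphaMinus W i S * prodDist p S

/-! Inducing a quarrel between `i` and `j` weakens `i`: compared with `W`, a coalition containing
`i` can only lose and a coalition without `i` can only win, while in the new game `i` joining a
winning coalition keeps it winning. Under these conditions both efficacy scores of `i` can only drop, by induction along
loyal children: at a division where `i` is not decisive in either game, the loyal children in the
weakened game are among those in the original one, and each extra child in the original game is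
a division where `i` is decisive, so its score is the maximal value `1`. -/

lemma sum_div_card_le_sum_div_card {β : Type*} [DecidableEq β] {A B : Finset β} {f g : β → ℝ}
    (hAB : A ⊆ B) (hA : A.Nonempty) (hfg : ∀ x ∈ A, f x ≤ g x) (hg : ∀ x ∈ A, g x ≤ 1)
    (hB : ∀ x ∈ B \ A, g x = 1) :
    (∑ x ∈ A, f x) / #A ≤ (∑ x ∈ B, g x) / #B := by
  have hA0 : (0 : ℝ) < #A := by exact_mod_cast hA.card_pos
  have hAB' : (#A : ℝ) ≤ #B := by exact_mod_cast card_le_card hAB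
  have hsumB : ∑ x ∈ B, g x = (#B - #A : ℝ) + ∑ x ∈ A, g x := by
    rw [← sum_sdiff hAB, sum_congr rfl hB, sum_const, nsmul_one, card_sdiff_of_subset hAB,
      Nat.cast_sub (card_le_card hAB)]
  have hfgA : ∑ x ∈ A, f x ≤ ∑ x ∈ A, g x := sum_le_sum hfg
  have hgA : ∑ x ∈ A, g x ≤ #A := by simpa using sum_le_sum hg
  rw [div_le_div_iff₀ hA0 (hA0.trans_le hAB'), hsumB]
  nlinarith [mul_nonneg (sub_nonneg.2 hgA) (sub_nonneg.2 hAB'),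
    mul_nonneg (sub_nonneg.2 hfgA) (hA0.le.trans hAB')]

section Efficacy

variable {α : Type*} [DecidableEq α]

structure IsWeakeningFor (W What : Finset (Finset α)) (i : α) : Prop where
  winning_of_mem : ∀ S : Finset α, i ∈ S → S ∈ What → S ∈ W
  winning_of_not_mem : ∀ S : Finset α, i ∉ S → S ∈ W → S ∈ What
  insert_winning : ∀ S : Finset α, i ∉ S → S ∈ What → insert i S ∈ What

variable {W What : Finset (Finset α)} {i : α} {S X : Finset α}

lemma mem_LCwin : X ∈ LCwin W S ↔ (∃ k ∈ S, S.erase k = X) ∧ X ∈ W := by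
  simp [LCwin]

lemma card_lt_of_mem_LCwin (hX : X ∈ LCwin W S) : X.card < S.card := by
  obtain ⟨⟨k, hk, rfl⟩, -⟩ := mem_LCwin.1 hX
  exact card_erase_lt_of_mem hk

lemma alphaPlus_eq_one (h : YesDecisive W i S) : alphaPlus W i S = 1 := by
  rw [YesDecisive] at h
  rw [alphaPlus, if_pos h]

lemma alphaPlus_eq_zero (h : S ∉ W ∨ i ∉ S) : alphaPlus W i S = 0 := by
  rw [alphaPlus, if_neg (by tauto), if_pos h]

lemma alphaPlus_eq_avg (hi : i ∈ S) (hS : S ∈ W) (hSi : S.erase i ∈ W) :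
    alphaPlus W i S = (∑ X ∈ LCwin W S, alphaPlus W i X) / #(LCwin W S) := by
  rw [alphaPlus, if_neg (by tauto), if_neg (by tauto), sum_attach]

lemma alphaPlus_nonneg (W : Finset (Finset α)) (i : α) (S : Finset α) :
    0 ≤ alphaPlus W i S := by
  rw [alphaPlus]
  split_ifs
  · exact zero_le_one
  · exact le_rfl
  · exact div_nonneg (sum_nonneg fun T _ => alphaPlus_nonneg W i T.1) (Nat.cast_nonneg _)
termination_by S.card
decreasing_by exact card_lt_of_mem_LCwin T.2

lemma alphaPlus_le_one (W : Finset (Finset α)) (i : α) (S : Finset α) :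
    alphaPlus W i S ≤ 1 := by
  rw [alphaPlus]
  split_ifs
  · exact le_rfl
  · exact zero_le_one
  · refine div_le_one_of_le₀ ?_ (Nat.cast_nonneg _)
    simpa using sum_le_sum (s := (LCwin W S).attach) fun T _ => alphaPlus_le_one W i T.1
termination_by S.card
decreasing_by exact card_lt_of_mem_LCwin T.2

lemma LCwin_subset (hw : IsWeakeningFor W What i) (hi : i ∈ S) (hSi : S.erase i ∈ W) :
    LCwin What S ⊆ LCwin W S := by
  intro X hX
  obtain ⟨⟨k, hk, rfl⟩, hX⟩ := mem_LCwin.1 hX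
  refine mem_LCwin.2 ⟨⟨k, hk, rfl⟩, ?_⟩
  obtain rfl | hki := eq_or_ne k i
  · exact hSi
  · exact hw.winning_of_mem _ (mem_erase.2 ⟨hki.symm, hi⟩) hX

lemma yesDecisive_of_mem_LCwin_sdiff (hw : IsWeakeningFor W What i) (hi : i ∈ S)
    (hSi : S.erase i ∈ What) (hX : X ∈ LCwin W S \ LCwin What S) : YesDecisive W i X := by
  obtain ⟨hXW, hXWhat⟩ := mem_sdiff.1 hX
  obtain ⟨⟨k, hk, rfl⟩, hXW⟩ := mem_LCwin.1 hXW
  have hXWhat : S.erase k ∉ What := fun h => hXWhat (mem_LCwin.2 ⟨⟨k, hk, rfl⟩, h⟩)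
  have hiX : i ∈ S.erase k := mem_erase.2 ⟨by rintro rfl; exact hXWhat hSi, hi⟩
  refine ⟨hiX, hXW, fun h => hXWhat ?_⟩
  rw [← insert_erase hiX]
  exact hw.insert_winning _ (notMem_erase _ _) (hw.winning_of_not_mem _ (notMem_erase _ _) h)

theorem alphaPlus_le_of_isWeakeningFor (hw : IsWeakeningFor W What i) (S : Finset α) :
    alphaPlus What i S ≤ alphaPlus W i S := by
  by_cases hS : i ∈ S ∧ S ∈ What
  swap
  · rw [alphaPlus_eq_zero (by tauto)]
    exact alphaPlus_nonneg W i S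
  obtain ⟨hi, hS⟩ := hS
  have hSW : S ∈ W := hw.winning_of_mem S hi hS
  by_cases hSi : S.erase i ∈ W
  swap
  · rw [alphaPlus_eq_one ⟨hi, hSW, hSi⟩]
    exact alphaPlus_le_one What i S
  have hSi' : S.erase i ∈ What := hw.winning_of_not_mem _ (notMem_erase i S) hSi
  rw [alphaPlus_eq_avg hi hS hSi', alphaPlus_eq_avg hi hSW hSi]
  refine sum_div_card_le_sum_div_card (LCwin_subset hw hi hSi)
    ⟨S.erase i, mem_LCwin.2 ⟨⟨i, hi, rfl⟩, hSi'⟩⟩ (fun X hX => ?_)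
    (fun X _ => alphaPlus_le_one W i X)
    (fun X hX => alphaPlus_eq_one (yesDecisive_of_mem_LCwin_sdiff hw hi hSi' hX))
  exact alphaPlus_le_of_isWeakeningFor hw X
termination_by S.card
decreasing_by exact card_lt_of_mem_LCwin hX

variable [Fintype α]

lemma mem_LCloss : X ∈ LCloss W S ↔ (∃ k ∈ Sᶜ, insert k S = X) ∧ X ∉ W := by
  simp [LCloss]

lemma card_compl_lt_of_mem_LCloss (hX : X ∈ LCloss W S) : Xᶜ.card < Sᶜ.card := by
  obtain ⟨⟨k, hk, rfl⟩, -⟩ := mem_LCloss.1 hX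
  rw [compl_insert]
  exact card_erase_lt_of_mem hk

lemma alphaMinus_eq_one (h : NoDecisive W i S) : alphaMinus W i S = 1 := by
  rw [NoDecisive] at h
  rw [alphaMinus, if_pos h]

lemma alphaMinus_eq_zero (h : S ∈ W ∨ i ∈ S) : alphaMinus W i S = 0 := by
  rw [alphaMinus, if_neg (by tauto), if_pos h]

lemma alphaMinus_eq_avg (hi : i ∉ S) (hS : S ∉ W) (hSi : insert i S ∉ W) :
    alphaMinus W i S = (∑ X ∈ LCloss W S, alphaMinus W i X) / #(LCloss W S) := by
  rw [alphaMinus, if_neg (by tauto), if_neg (by tauto), sum_attach]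

lemma alphaMinus_nonneg (W : Finset (Finset α)) (i : α) (S : Finset α) :
    0 ≤ alphaMinus W i S := by
  rw [alphaMinus]
  split_ifs
  · exact zero_le_one
  · exact le_rfl
  · exact div_nonneg (sum_nonneg fun T _ => alphaMinus_nonneg W i T.1) (Nat.cast_nonneg _)
termination_by Sᶜ.card
decreasing_by exact card_compl_lt_of_mem_LCloss T.2

lemma alphaMinus_le_one (W : Finset (Finset α)) (i : α) (S : Finset α) :
    alphaMinus W i S ≤ 1 := by
  rw [alphaMinus]
  split_ifs
  · exact le_rfl
  · exact zero_le_one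
  · refine div_le_one_of_le₀ ?_ (Nat.cast_nonneg _)
    simpa using sum_le_sum (s := (LCloss W S).attach) fun T _ => alphaMinus_le_one W i T.1
termination_by Sᶜ.card
decreasing_by exact card_compl_lt_of_mem_LCloss T.2

lemma LCloss_subset (hw : IsWeakeningFor W What i) (hi : i ∉ S) (hSi : insert i S ∉ W) :
    LCloss What S ⊆ LCloss W S := by
  intro X hX
  obtain ⟨⟨k, hk, rfl⟩, hX⟩ := mem_LCloss.1 hX
  refine mem_LCloss.2 ⟨⟨k, hk, rfl⟩, ?_⟩
  obtain rfl | hki := eq_or_ne k i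
  · exact hSi
  · exact fun h => hX (hw.winning_of_not_mem _ (by simp [hki.symm, hi]) h)

lemma noDecisive_of_mem_LCloss_sdiff (hw : IsWeakeningFor W What i) (hi : i ∉ S)
    (hSi : insert i S ∉ What) (hX : X ∈ LCloss W S \ LCloss What S) : NoDecisive W i X := by
  obtain ⟨hXW, hXWhat⟩ := mem_sdiff.1 hX
  obtain ⟨⟨k, hk, rfl⟩, hXW⟩ := mem_LCloss.1 hXW
  have hXWhat : insert k S ∈ What := by
    by_contra h
    exact hXWhat (mem_LCloss.2 ⟨⟨k, hk, rfl⟩, h⟩)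
  have hiX : i ∉ insert k S := by
    rw [mem_insert]
    rintro (rfl | h)
    · exact hSi hXWhat
    · exact hi h
  exact ⟨hiX, hXW, hw.winning_of_mem _ (mem_insert_self i _) (hw.insert_winning _ hiX hXWhat)⟩

theorem alphaMinus_le_of_isWeakeningFor (hw : IsWeakeningFor W What i) (S : Finset α) :
    alphaMinus What i S ≤ alphaMinus W i S := by
  by_cases hS : i ∉ S ∧ S ∉ What
  swap
  · rw [alphaMinus_eq_zero (by tauto)]
    exact alphaMinus_nonneg W i S
  obtain ⟨hi, hS⟩ := hS
  have hSW : S ∉ W := fun h => hS (hw.winning_of_not_mem S hi h)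
  by_cases hSi' : insert i S ∈ What
  · rw [alphaMinus_eq_one ⟨hi, hSW, hw.winning_of_mem _ (mem_insert_self i S) hSi'⟩]
    exact alphaMinus_le_one What i S
  by_cases hSi : insert i S ∈ W
  · rw [alphaMinus_eq_one ⟨hi, hSW, hSi⟩]
    exact alphaMinus_le_one What i S
  rw [alphaMinus_eq_avg hi hS hSi', alphaMinus_eq_avg hi hSW hSi]
  refine sum_div_card_le_sum_div_card (LCloss_subset hw hi hSi)
    ⟨insert i S, mem_LCloss.2 ⟨⟨i, mem_compl.2 hi, rfl⟩, hSi'⟩⟩ (fun X hX => ?_)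
    (fun X _ => alphaMinus_le_one W i X)
    (fun X hX => alphaMinus_eq_one (noDecisive_of_mem_LCloss_sdiff hw hi hSi' hX))
  exact alphaMinus_le_of_isWeakeningFor hw X
termination_by Sᶜ.card
decreasing_by exact card_compl_lt_of_mem_LCloss hX

theorem RM_le_of_isWeakeningFor (hw : IsWeakeningFor W What i) : RM What i ≤ RM W i := by
  unfold RM alphaScore
  gcongr with S
  · exact alphaPlus_le_of_isWeakeningFor hw S
  · exact alphaMinus_le_of_isWeakeningFor hw S

end Efficacy

section Quarrel

variable {α : Type*} [DecidableEq α] {W What : Finset (Finset α)} {i j : α}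

theorem Quarrel.symm (hq : Quarrel W What i j) : Quarrel W What j i := by
  intro S hj hi
  obtain ⟨hij, hnone, hi', hj'⟩ := hq S hi hj
  exact ⟨insert_comm j i S ▸ hij.trans or_comm, hnone.trans and_comm, hj', hi'⟩

theorem Quarrel.isWeakeningFor (hW : ∀ S T : Finset α, S ∈ W → S ⊆ T → T ∈ W) (hij : i ≠ j)
    (hq : Quarrel W What i j) : IsWeakeningFor W What i where
  winning_of_mem S hi hS := by
    by_cases hj : j ∈ S
    · have hjS : j ∈ S.erase i := mem_erase.2 ⟨hij.symm, hj⟩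
      have hboth := (hq ((S.erase i).erase j) (by simp) (by simp)).1
      rw [insert_erase hjS, insert_erase hi] at hboth
      rcases hboth.1 hS with h | h
      · exact hW _ _ h (insert_subset hi ((erase_subset _ _).trans (erase_subset _ _)))
      · exact hW _ _ h (erase_subset i S)
    · have honly := (hq (S.erase i) (notMem_erase i S) (by simp [hj])).2.2.1
      rw [insert_erase hi] at honly
      exact honly.1 hS
  winning_of_not_mem S hi hS := by
    by_cases hj : j ∈ S
    · have honly := (hq (S.erase j) (by simp [hi]) (notMem_erase j S)).2.2.2
      rw [insert_erase hj] at honly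
      exact honly.2 hS
    · exact (hq S hi hj).2.1.2 ⟨hW _ _ hS (subset_insert i S), hW _ _ hS (subset_insert j S)⟩
  insert_winning S hi hS := by
    by_cases hj : j ∈ S
    · obtain ⟨hboth, -, -, honly⟩ := hq (S.erase j) (by simp [hi]) (notMem_erase j S)
      rw [insert_erase hj] at hboth honly
      exact hboth.2 (Or.inr (honly.1 hS))
    · obtain ⟨-, hnone, honly, -⟩ := hq S hi hj
      exact honly.2 (hnone.1 hS).1

end Quarrel

/-- RM satisfies the standard quarrel postulate. -/
theorem rm_quarrel {n : ℕ} (W What : Finset (Finset (Fin n)))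
    (hW : SimpleVotingGame W) (i j : Fin n) (hij : i ≠ j)
    (hq : Quarrel W What i j) :
    RM What i ≤ RM W i ∧ RM What j ≤ RM W j :=
  ⟨RM_le_of_isWeakeningFor (hq.isWeakeningFor hW.1 hij),
    RM_le_of_isWeakeningFor (hq.symm.isWeakeningFor hW.1 hij.symm)⟩
end

section
/- Let W be a simple voting game on [n] and let G^Y be the game on [n]∪{0} obtained by adding an added YES-blocker 0, with winning coalitions W^Y = { S∪{0} : S∈W }. Then for every player i∈[n] and every S⊆[n]: (B1) α⁺_{i,G^Y}(S∪{0}) = α⁺_{i,W}(S); (B2) α⁺_{i,G^Y}(S) = 0 (for the division of G^Y in which 0 votes NO); and (B3) α⁻_{i,G^Y}(S∪{0}) = α⁻_{i,W}(S). -/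
open Finset

variable {α : Type*} [Fintype α] [DecidableEq α]

/-!
`S ↦ S ∪ {0}` maps the divisions of `W` bijectively onto the divisions of `G^Y` in which the
blocker votes YES, preserving winning and the decisiveness of every `i ∈ [n]`. It also maps loyal
children onto loyal children: removing `0` from a winning division makes it lose, and a losing
division containing `0` has only children containing `0`. Hence the recursions defining `α⁺_i`
and `α⁻_i` run in parallel. A division in which `0` votes NO loses, so `α⁺_i` vanishes there.
-/

theorem card_lt_card_of_mem_LCwin {β : Type*} [DecidableEq β] {W : Finset (Finset β)}
    {S T : Finset β} (hT : T ∈ LCwin W S) : T.card < S.card := by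
  simp only [LCwin, mem_filter, mem_image] at hT
  obtain ⟨⟨k, hk, rfl⟩, -⟩ := hT
  exact card_erase_lt_of_mem hk

theorem card_compl_lt_card_compl_of_mem_LCloss {β : Type*} [Fintype β] [DecidableEq β]
    {W : Finset (Finset β)} {S T : Finset β} (hT : T ∈ LCloss W S) : Tᶜ.card < Sᶜ.card := by
  simp only [LCloss, mem_filter, mem_image] at hT
  obtain ⟨⟨k, hk, rfl⟩, -⟩ := hT
  rw [compl_insert]
  exact card_erase_lt_of_mem hk

theorem alphaPlus_of_notMem {β : Type*} [DecidableEq β] {W : Finset (Finset β)}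
    {S : Finset β} (hS : S ∉ W) (i : β) : alphaPlus W i S = 0 := by
  rw [alphaPlus, if_neg fun h => hS h.2.1, if_pos (Or.inl hS)]

section AddYesBlocker

variable {β : Type*}

/-- The game `G^Y` on `Option β`, the new player `none` being the added YES-blocker. -/
def addYesBlocker (W : Finset (Finset β)) : Finset (Finset (Option β)) :=
  W.map insertNone.toEmbedding

variable (W : Finset (Finset β))

theorem insertNone_mem_addYesBlocker {S : Finset β} : insertNone S ∈ addYesBlocker W ↔ S ∈ W :=
  mem_map' _

theorem none_mem_of_mem_addYesBlocker {T : Finset (Option β)} (hT : T ∈ addYesBlocker W) :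
    none ∈ T := by
  obtain ⟨S, -, rfl⟩ := mem_map.mp hT
  exact none_mem_insertNone

variable [DecidableEq β]

theorem Finset.insertNone_eq_insert_image (s : Finset β) :
    insertNone s = insert none (s.image some) := by
  ext (_ | x) <;> simp

theorem Finset.insertNone_erase_some (s : Finset β) (b : β) :
    (insertNone s).erase (some b) = insertNone (s.erase b) := by
  ext (_ | x) <;> simp

theorem Finset.insert_some_insertNone (s : Finset β) (b : β) :
    insert (some b) (insertNone s) = insertNone (insert b s) := by
  ext (_ | x) <;> simp

theorem image_insert_none_image_some :
    W.image (fun S => insert none (S.image some)) = addYesBlocker W := by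
  simp only [addYesBlocker, map_eq_image, RelEmbedding.coe_toEmbedding,
    ← insertNone_eq_insert_image]

theorem LCwin_addYesBlocker (S : Finset β) :
    LCwin (addYesBlocker W) (insertNone S) = (LCwin W S).map insertNone.toEmbedding := by
  ext T
  simp only [LCwin, mem_filter, mem_image, mem_map, Option.exists, RelEmbedding.coe_toEmbedding,
    some_mem_insertNone, insertNone_erase_some]
  constructor
  · rintro ⟨(⟨-, rfl⟩ | ⟨k, hk, rfl⟩), hT⟩
    · exact absurd (none_mem_of_mem_addYesBlocker W hT) (notMem_erase none _)
    · exact ⟨_, ⟨⟨k, hk, rfl⟩, (insertNone_mem_addYesBlocker W).mp hT⟩, rfl⟩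
  · rintro ⟨_, ⟨⟨k, hk, rfl⟩, hU⟩, rfl⟩
    exact ⟨Or.inr ⟨k, hk, rfl⟩, (insertNone_mem_addYesBlocker W).mpr hU⟩

theorem LCloss_addYesBlocker [Fintype β] (S : Finset β) :
    LCloss (addYesBlocker W) (insertNone S) = (LCloss W S).map insertNone.toEmbedding := by
  ext T
  simp only [LCloss, mem_filter, mem_image, mem_map, Option.exists, RelEmbedding.coe_toEmbedding,
    mem_compl, some_mem_insertNone, insert_some_insertNone, none_mem_insertNone, not_true,
    false_and, false_or]
  constructor
  · rintro ⟨⟨k, hk, rfl⟩, hT⟩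
    exact ⟨_, ⟨⟨k, hk, rfl⟩, mt (insertNone_mem_addYesBlocker W).mpr hT⟩, rfl⟩
  · rintro ⟨_, ⟨⟨k, hk, rfl⟩, hU⟩, rfl⟩
    exact ⟨⟨k, hk, rfl⟩, mt (insertNone_mem_addYesBlocker W).mp hU⟩

theorem alphaPlus_addYesBlocker_insertNone (i : β) (S : Finset β) :
    alphaPlus (addYesBlocker W) (some i) (insertNone S) = alphaPlus W i S := by
  rw [alphaPlus.eq_1 (addYesBlocker W), alphaPlus.eq_1 W, sum_attach, sum_attach,
    LCwin_addYesBlocker, sum_map, card_map]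
  simp only [some_mem_insertNone, insertNone_mem_addYesBlocker, insertNone_erase_some,
    RelEmbedding.coe_toEmbedding]
  congr 3
  exact sum_congr rfl fun T hT => alphaPlus_addYesBlocker_insertNone i T
termination_by S.card
decreasing_by exact card_lt_card_of_mem_LCwin hT

theorem alphaMinus_addYesBlocker_insertNone [Fintype β] (i : β) (S : Finset β) :
    alphaMinus (addYesBlocker W) (some i) (insertNone S) = alphaMinus W i S := by
  rw [alphaMinus.eq_1 (addYesBlocker W), alphaMinus.eq_1 W, sum_attach, sum_attach,
    LCloss_addYesBlocker, sum_map, card_map]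
  simp only [some_mem_insertNone, insertNone_mem_addYesBlocker, insert_some_insertNone,
    RelEmbedding.coe_toEmbedding]
  congr 3
  exact sum_congr rfl fun T hT => alphaMinus_addYesBlocker_insertNone i T
termination_by Sᶜ.card
decreasing_by exact card_compl_lt_card_compl_of_mem_LCloss hT

end AddYesBlocker

theorem added_yes_blocker_scores_general {n : ℕ} (W : Finset (Finset (Fin n)))
    (WY : Finset (Finset (Option (Fin n))))
    (hWY : WY = W.image (fun S => insert none (S.image some)))
    (i : Fin n) (S : Finset (Fin n)) :
    alphaPlus WY (some i) (insert none (S.image some)) = alphaPlus W i S ∧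
    alphaPlus WY (some i) (S.image some) = 0 ∧
    alphaMinus WY (some i) (insert none (S.image some)) = alphaMinus W i S := by
  rw [hWY, image_insert_none_image_some, ← insertNone_eq_insert_image]
  exact ⟨alphaPlus_addYesBlocker_insertNone W i S,
    alphaPlus_of_notMem (fun h => by simpa using none_mem_of_mem_addYesBlocker W h) _,
    alphaMinus_addYesBlocker_insertNone W i S⟩

/-- efficacy scores after adding an added YES-blocker `0 = none`. -/
theorem added_yes_blocker_scores {n : ℕ} (W : Finset (Finset (Fin n)))
    (hW : SimpleVotingGame W)
    (WY : Finset (Finset (Option (Fin n))))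
    (hWY : WY = W.image (fun S => insert none (S.image some)))
    (i : Fin n) (S : Finset (Fin n)) :
    alphaPlus WY (some i) (insert none (S.image some)) = alphaPlus W i S ∧
    alphaPlus WY (some i) (S.image some) = 0 ∧
    alphaMinus WY (some i) (insert none (S.image some)) = alphaMinus W i S :=
  added_yes_blocker_scores_general W WY hWY i S
end

section
/- Let W be a simple voting game on [n] and let G^N be the game on [n]∪{0} obtained by adding an added NO-blocker 0, with winning coalitions W^N = { S∪{0} : S⊆[n] } ∪ W. Then for every player i∈[n] and every S⊆[n]: α⁺_{i,G^N}(S) = α⁺_{i,W}(S) (for the division of G^N in which 0 votes NO); α⁻_{i,G^N}(S∪{0}) = 0; and α⁻_{i,G^N}(S) = α⁻_{i,W}(S) (for the division of G^N in which 0 votes NO). -/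
open Finset

variable {α : Type*} [Fintype α] [DecidableEq α]

/-! The embedding `some` identifies divisions of `W` with the divisions of `G^N` in which `0`
votes NO, and preserves winning. It therefore maps the winning loyal children of `S` onto those
of its image, and also the losing ones, because a child obtained by adding the NO-blocker `0`
wins and is discarded. Both score recursions are thus transported unchanged. A division in
which `0` votes YES wins, so its NO-score vanishes. -/

section

variable {β γ : Type*} [DecidableEq β] [DecidableEq γ] {W : Finset (Finset β)}
  {V : Finset (Finset γ)} {f : β ↪ γ}

theorem card_lt_of_mem_LCwin_s17 {S T : Finset β} (hT : T ∈ LCwin W S) : T.card < S.card := by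
  obtain ⟨⟨k, hk, rfl⟩, -⟩ := by simpa only [LCwin, mem_filter, mem_image] using hT
  exact card_erase_lt_of_mem hk

theorem LCwin_map (hV : ∀ S, S.map f ∈ V ↔ S ∈ W) (S : Finset β) :
    LCwin V (S.map f) = (LCwin W S).map (mapEmbedding f).toEmbedding := by
  ext T
  simp only [LCwin, mem_filter, mem_image, mem_map, RelEmbedding.coe_toEmbedding,
    mapEmbedding_apply]
  constructor
  · rintro ⟨⟨_, ⟨k, hk, rfl⟩, rfl⟩, hT⟩
    rw [← map_erase, hV] at hT
    exact ⟨S.erase k, ⟨⟨k, hk, rfl⟩, hT⟩, map_erase f S k⟩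
  · rintro ⟨_, ⟨⟨k, hk, rfl⟩, hU⟩, rfl⟩
    exact ⟨⟨f k, ⟨k, hk, rfl⟩, (map_erase f S k).symm⟩, (hV _).2 hU⟩

theorem alphaPlus_map (hV : ∀ S, S.map f ∈ V ↔ S ∈ W) (i : β) (S : Finset β) :
    alphaPlus V (f i) (S.map f) = alphaPlus W i S := by
  have hchildren : ∑ T ∈ (LCwin V (S.map f)).attach, alphaPlus V (f i) T.1 =
      ∑ T ∈ (LCwin W S).attach, alphaPlus W i T.1 := by
    rw [sum_attach, sum_attach, LCwin_map hV, sum_map]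
    exact sum_congr rfl fun T hT => alphaPlus_map hV i T
  rw [alphaPlus, alphaPlus, hchildren, LCwin_map hV, card_map]
  simp only [mem_map', ← map_erase, hV]
termination_by S.card
decreasing_by exact card_lt_of_mem_LCwin_s17 hT

variable [Fintype β] [Fintype γ]

theorem card_compl_lt_of_mem_LCloss_s17 {S T : Finset β} (hT : T ∈ LCloss W S) :
    Tᶜ.card < Sᶜ.card := by
  obtain ⟨⟨k, hk, rfl⟩, -⟩ := by simpa only [LCloss, mem_filter, mem_image] using hT
  rw [compl_insert]
  exact card_erase_lt_of_mem hk

theorem alphaMinus_eq_zero_of_mem {S : Finset β} (i : β) (hS : S ∈ W) : alphaMinus W i S = 0 := by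
  rw [alphaMinus, if_neg fun h => h.2.1 hS, if_pos (Or.inl hS)]

theorem LCloss_map (hV : ∀ S, S.map f ∈ V ↔ S ∈ W)
    (hnew : ∀ S : Finset β, ∀ k ∉ Set.range f, insert k (S.map f) ∈ V) (S : Finset β) :
    LCloss V (S.map f) = (LCloss W S).map (mapEmbedding f).toEmbedding := by
  ext T
  simp only [LCloss, mem_filter, mem_image, mem_map, mem_compl, RelEmbedding.coe_toEmbedding,
    mapEmbedding_apply]
  constructor
  · rintro ⟨⟨k, hk, rfl⟩, hT⟩
    by_cases hkf : k ∈ Set.range f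
    · obtain ⟨j, rfl⟩ := hkf
      rw [← map_insert, hV] at hT
      exact ⟨insert j S, ⟨⟨j, fun hj => hk ⟨j, hj, rfl⟩, rfl⟩, hT⟩, map_insert f j S⟩
    · exact absurd (hnew S k hkf) hT
  · rintro ⟨_, ⟨⟨k, hk, rfl⟩, hU⟩, rfl⟩
    exact ⟨⟨f k, fun ⟨j, hj, hjk⟩ => hk (f.injective hjk ▸ hj), (map_insert f k S).symm⟩,
      (hV _).not.2 hU⟩

theorem alphaMinus_map (hV : ∀ S, S.map f ∈ V ↔ S ∈ W)
    (hnew : ∀ S : Finset β, ∀ k ∉ Set.range f, insert k (S.map f) ∈ V) (i : β) (S : Finset β) :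
    alphaMinus V (f i) (S.map f) = alphaMinus W i S := by
  have hchildren : ∑ T ∈ (LCloss V (S.map f)).attach, alphaMinus V (f i) T.1 =
      ∑ T ∈ (LCloss W S).attach, alphaMinus W i T.1 := by
    rw [sum_attach, sum_attach, LCloss_map hV hnew, sum_map]
    exact sum_congr rfl fun T hT => alphaMinus_map hV hnew i T
  rw [alphaMinus, alphaMinus, hchildren, LCloss_map hV hnew, card_map]
  simp only [mem_map', ← map_insert, hV]
termination_by Sᶜ.card
decreasing_by exact card_compl_lt_of_mem_LCloss_s17 hT

end

theorem added_no_blocker_scores_general {n : ℕ} (W : Finset (Finset (Fin n)))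
    (WN : Finset (Finset (Option (Fin n))))
    (hWN : WN = (univ : Finset (Finset (Fin n))).image (fun S => insert none (S.image some)) ∪
      W.image (fun S => S.image some))
    (i : Fin n) (S : Finset (Fin n)) :
    alphaPlus WN (some i) (S.image some) = alphaPlus W i S ∧
    alphaMinus WN (some i) (insert none (S.image some)) = 0 ∧
    alphaMinus WN (some i) (S.image some) = alphaMinus W i S := by
  have himage : ∀ T : Finset (Fin n), T.image some = T.map .some := fun T => by
    ext; simp
  simp only [himage] at hWN ⊢
  have hblock : ∀ T : Finset (Fin n), insert none (T.map .some) ∈ WN := fun T => by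
    simp [hWN]
  have hV : ∀ T : Finset (Fin n), T.map .some ∈ WN ↔ T ∈ W := fun T => by
    simp only [hWN, mem_union, mem_image, mem_univ, true_and, map_inj, exists_eq_right,
      or_iff_right_iff_imp]
    rintro ⟨U, hU⟩
    simpa using congrArg (none ∈ ·) hU
  have hnew : ∀ T : Finset (Fin n), ∀ k ∉ Set.range Function.Embedding.some,
      insert k (T.map .some) ∈ WN := by
    rintro T (_ | k) hk
    exacts [hblock T, absurd ⟨k, rfl⟩ hk]
  exact ⟨alphaPlus_map hV i S, alphaMinus_eq_zero_of_mem _ (hblock S), alphaMinus_map hV hnew i S⟩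

/-- efficacy scores after adding an added NO-blocker `0 = none`. -/
theorem added_no_blocker_scores {n : ℕ} (W : Finset (Finset (Fin n)))
    (hW : SimpleVotingGame W)
    (WN : Finset (Finset (Option (Fin n))))
    (hWN : WN = (univ : Finset (Finset (Fin n))).image (fun S => insert none (S.image some)) ∪
      W.image (fun S => S.image some))
    (i : Fin n) (S : Finset (Fin n)) :
    alphaPlus WN (some i) (S.image some) = alphaPlus W i S ∧
    alphaMinus WN (some i) (insert none (S.image some)) = 0 ∧
    alphaMinus WN (some i) (S.image some) = alphaMinus W i S :=
  added_no_blocker_scores_general W WN hWN i S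
end
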